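/- Let D = ℍ[K,a,b] be a division ring with ν_K(a) = 0 and ν_K(b) ∈ {0,1}, and set j = 1 if ν_K(b) = 0 and j = 2 if ν_K(b) = 1. Let σ = τ_λ with λ ∈ {1, x, y}, let ε ∈ {1,-1}, and let u ∈ D be a nonzero ε-symmetric element (σ(u) = ε·u). Then there exists an invertible t ∈ D such that σ(t)·u·t = δ + αx + βy + γz with δ, α, β, γ ∈ O_K and ν_D(σ(t)·u·t) ∈ {0, 1/j}. In other words, every one-dimensional ε-hermitian form over (D, σ) has, up to isometry, a diagonal entry with coordinates in O_K and valuation 0 or 1/j. -/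

import Mathlib

noncomputable section

/-- A surjective discrete valuation `ν : K → ℤ` on a field `K`
(the value of `ν` at `0` is irrelevant: only nonzero elements are constrained). -/
structure DVal (K : Type) [Field K] : Type where
  ν : K → ℤ
  ν_mul : ∀ x y : K, x ≠ 0 → y ≠ 0 → ν (x * y) = ν x + ν y
  ν_add : ∀ x y : K, x ≠ 0 → y ≠ 0 → x + y ≠ 0 → min (ν x) (ν y) ≤ ν (x + y)
  ν_one : ν 1 = 0
  ν_surj : ∀ n : ℤ, ∃ x : K, x ≠ 0 ∧ ν x = n

namespace DVal

variable {K : Type} [Field K]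

/-- `x` belongs to the valuation ring `O_K`. -/
def Int (V : DVal K) (x : K) : Prop := x = 0 ∨ 0 ≤ V.ν x

/-- `x` is a unit of the valuation ring `O_K`. -/
def IntUnit (V : DVal K) (x : K) : Prop := x ≠ 0 ∧ V.ν x = 0

/-- `x` belongs to the maximal ideal `m_K` of the valuation ring `O_K`. -/
def MaxIdeal (V : DVal K) (x : K) : Prop := x = 0 ∨ 1 ≤ V.ν x

/-- `K` is complete with respect to the valuation `ν`: every Cauchy sequence converges. -/
def IsComplete (V : DVal K) : Prop :=
  ∀ f : ℕ → K,
    (∀ M : ℤ, ∃ N : ℕ, ∀ m n : ℕ, N ≤ m → N ≤ n →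
      f m - f n = 0 ∨ M ≤ V.ν (f m - f n)) →
    ∃ L : K, ∀ M : ℤ, ∃ N : ℕ, ∀ n : ℕ, N ≤ n →
      f n - L = 0 ∨ M ≤ V.ν (f n - L)

/-- The residue field `k = O_K/m_K` has characteristic different from `2`,
i.e. `2` is a unit of the valuation ring `O_K`. -/
def ResCharNeTwo (V : DVal K) : Prop := (2 : K) ≠ 0 ∧ V.ν 2 = 0

end DVal

/-- The reduced norm of a quaternion `u = δ + αx + βy + γz ∈ ℍ[K,a,b]`:
`Nrd u = u·τ(u) = δ² - aα² - bβ² + abγ²`. -/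
def qnrd {K : Type} [Field K] (a b : K) (u : QuaternionAlgebra K a 0 b) : K :=
  u.re ^ 2 - a * u.imI ^ 2 - b * u.imJ ^ 2 + a * b * u.imK ^ 2

/-- The canonical involution `τ(δ + αx + βy + γz) = δ - αx - βy - γz` of `ℍ[K,a,b]`. -/
def qtau {K : Type} [Field K] {a b : K} (u : QuaternionAlgebra K a 0 b) :
    QuaternionAlgebra K a 0 b :=
  ⟨u.re, -u.imI, -u.imJ, -u.imK⟩

/-- The norm form `⟨1,-a,-b,ab⟩` of `ℍ[K,a,b]` is anisotropic over `K`
(equivalently, `ℍ[K,a,b]` is a division ring). -/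
def QAniso {K : Type} [Field K] (a b : K) : Prop :=
  ∀ d e f g : K, d ^ 2 - a * e ^ 2 - b * f ^ 2 + a * b * g ^ 2 = 0 →
    d = 0 ∧ e = 0 ∧ f = 0 ∧ g = 0

/-- The valuation `ν_D(u) = (1/2)·ν_K(Nrd u)` of the quaternion division algebra
`D = ℍ[K,a,b]` (at nonzero `u`). -/
def qnu {K : Type} [Field K] (V : DVal K) (a b : K) (u : QuaternionAlgebra K a 0 b) : ℚ :=
  (V.ν (qnrd a b u) : ℚ) / 2

/-!
The reduced norm controls everything: `Nrd(τ_λ(t) u t) = Nrd(t)² Nrd(u)`, so twisting by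
`t = π^m` or `t = π^m y` changes `ν(Nrd)` by `4m` or `4m + 2ν(b)`, which brings it to `0` or
`2/j` (when `ν(b) = 0`, `ν(Nrd u)` is even). It remains to see that `ν(Nrd w) ≥ 0` puts the
coordinates of `w` in `O_K`. An anisotropic diagonal form with unit coefficients takes unit
values on primitive integral vectors (otherwise Hensel's lemma makes it isotropic), so its
valuation is twice the least valuation of the coordinates. This applies to `⟨1,-a,-b,ab⟩` when
`ν(b) = 0`; when `ν(b) = 1` it applies to both halves of `Nrd = ⟨1,-a⟩ ⊥ -b⟨1,-a⟩`, whose values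
have valuations of different parity and so cannot cancel.
-/

namespace DVal

variable {K : Type} [Field K] (V : DVal K)

/-- `x ∈ π^M O_K`. -/
def NuGe (M : ℤ) (x : K) : Prop := x = 0 ∨ M ≤ V.ν x

variable {V}

theorem ν_neg_one : V.ν (-1) = 0 := by
  have h := V.ν_mul (-1) (-1) (by norm_num) (by norm_num)
  rw [neg_one_mul, neg_neg, V.ν_one] at h
  omega

theorem ν_neg {x : K} (hx : x ≠ 0) : V.ν (-x) = V.ν x := by
  rw [← neg_one_mul, V.ν_mul _ _ (by norm_num) hx, ν_neg_one, zero_add]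

theorem ν_inv {x : K} (hx : x ≠ 0) : V.ν x⁻¹ = -V.ν x := by
  have h := V.ν_mul x x⁻¹ hx (inv_ne_zero hx)
  rw [mul_inv_cancel₀ hx, V.ν_one] at h
  omega

theorem ν_div {x y : K} (hx : x ≠ 0) (hy : y ≠ 0) : V.ν (x / y) = V.ν x - V.ν y := by
  rw [div_eq_mul_inv, V.ν_mul x y⁻¹ hx (inv_ne_zero hy), ν_inv hy, sub_eq_add_neg]

theorem ν_pow {x : K} (hx : x ≠ 0) (n : ℕ) : V.ν (x ^ n) = n * V.ν x := by
  induction n with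
  | zero => simpa using V.ν_one
  | succ k ih => rw [pow_succ, V.ν_mul _ _ (pow_ne_zero _ hx) hx, ih]; push_cast; ring

theorem ν_zpow {x : K} (hx : x ≠ 0) (n : ℤ) : V.ν (x ^ n) = n * V.ν x := by
  cases n with
  | ofNat k => rw [Int.ofNat_eq_natCast, zpow_natCast, ν_pow hx]
  | negSucc k =>
    rw [zpow_negSucc, ν_inv (pow_ne_zero _ hx), ν_pow hx, Int.negSucc_eq]; push_cast; ring

theorem ν_add_eq_of_lt {x y : K} (hx : x ≠ 0) (hy : V.NuGe (V.ν x + 1) y) :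
    x + y ≠ 0 ∧ V.ν (x + y) = V.ν x := by
  rcases eq_or_ne y 0 with rfl | hy0
  · simpa using hx
  have hyν := hy.resolve_left hy0
  have hxy : x + y ≠ 0 := by
    intro h
    rw [eq_neg_of_add_eq_zero_right h, ν_neg hx] at hyν
    omega
  have h1 := V.ν_add x y hx hy0 hxy
  have h2 := V.ν_add (x + y) (-y) hxy (neg_ne_zero.mpr hy0) (by simpa using hx)
  rw [ν_neg hy0, add_neg_cancel_right] at h2
  exact ⟨hxy, by omega⟩

theorem eq_zero_of_forall_nuGe {x : K} (h : ∀ n : ℕ, V.NuGe (n + 1) x) : x = 0 :=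
  (h (V.ν x).toNat).resolve_right (by omega)

namespace NuGe

theorem zero (M : ℤ) : V.NuGe M 0 := Or.inl rfl

theorem mono {M M' : ℤ} (h : M' ≤ M) {x : K} (hx : V.NuGe M x) : V.NuGe M' x :=
  hx.imp_right h.trans

theorem neg {M : ℤ} {x : K} (hx : V.NuGe M x) : V.NuGe M (-x) := by
  rcases eq_or_ne x 0 with rfl | h
  · simpa using zero M
  · exact Or.inr (by rw [ν_neg h]; exact hx.resolve_left h)

theorem add {M : ℤ} {x y : K} (hx : V.NuGe M x) (hy : V.NuGe M y) : V.NuGe M (x + y) := by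
  rcases eq_or_ne x 0 with rfl | hx0
  · simpa using hy
  rcases eq_or_ne y 0 with rfl | hy0
  · simpa using hx
  rcases eq_or_ne (x + y) 0 with hxy | hxy
  · exact Or.inl hxy
  exact Or.inr
    ((le_min (hx.resolve_left hx0) (hy.resolve_left hy0)).trans (V.ν_add x y hx0 hy0 hxy))

theorem sub {M : ℤ} {x y : K} (hx : V.NuGe M x) (hy : V.NuGe M y) : V.NuGe M (x - y) := by
  rw [sub_eq_add_neg]; exact hx.add hy.neg

theorem mul {M N : ℤ} {x y : K} (hx : V.NuGe M x) (hy : V.NuGe N y) : V.NuGe (M + N) (x * y) := by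
  rcases eq_or_ne x 0 with rfl | hx0
  · simpa using zero _
  rcases eq_or_ne y 0 with rfl | hy0
  · simpa using zero _
  exact Or.inr (by rw [V.ν_mul x y hx0 hy0]; linarith [hx.resolve_left hx0, hy.resolve_left hy0])

theorem div {M : ℤ} {x y : K} (hx : V.NuGe M x) (hy : y ≠ 0) : V.NuGe (M - V.ν y) (x / y) := by
  rcases eq_or_ne x 0 with rfl | hx0
  · simpa using zero _
  exact Or.inr (by rw [ν_div hx0 hy]; linarith [hx.resolve_left hx0])

theorem sum {ι : Type*} {s : Finset ι} {M : ℤ} {f : ι → K} (h : ∀ i ∈ s, V.NuGe M (f i)) :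
    V.NuGe M (∑ i ∈ s, f i) :=
  Finset.sum_induction f (V.NuGe M) (fun _ _ => add) (zero M) h

theorem of_add {M : ℤ} {x y : K} (h : V.NuGe M (x + y))
    (hxy : x ≠ 0 → y ≠ 0 → V.ν x ≠ V.ν y) : V.NuGe M x ∧ V.NuGe M y := by
  rcases eq_or_ne x 0 with rfl | hx0
  · exact ⟨zero M, by simpa using h⟩
  rcases eq_or_ne y 0 with rfl | hy0
  · exact ⟨by simpa using h, zero M⟩
  rcases lt_or_gt_of_ne (hxy hx0 hy0) with hlt | hlt
  · obtain ⟨hs, hsν⟩ := ν_add_eq_of_lt hx0 (Or.inr hlt)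
    have := h.resolve_left hs
    exact ⟨Or.inr (by omega), Or.inr (by omega)⟩
  · obtain ⟨hs, hsν⟩ := ν_add_eq_of_lt hy0 (Or.inr hlt)
    have := (add_comm x y ▸ h).resolve_left hs
    exact ⟨Or.inr (by omega), Or.inr (by omega)⟩

end NuGe

theorem newton_step (h2 : V.ResCharNeTwo) {c x : K} (hx : x ≠ 0) (hxν : V.ν x = 0) {k : ℤ}
    (hk : 1 ≤ k) (hc : V.NuGe k (x ^ 2 - c)) :
    (x + c / x) / 2 ≠ 0 ∧ V.ν ((x + c / x) / 2) = 0 ∧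
      V.NuGe (k + 1) (((x + c / x) / 2) ^ 2 - c) ∧ V.NuGe k ((x + c / x) / 2 - x) := by
  have h2' : (2 : K) ≠ 0 := h2.1
  have h2x : 2 * x ≠ 0 := mul_ne_zero h2' hx
  have h2xν : V.ν (2 * x) = 0 := by rw [V.ν_mul _ _ h2' hx, h2.2, hxν, add_zero]
  have hstep : V.NuGe k ((x + c / x) / 2 - x) := by
    have := (hc.neg.div h2x).mono (M' := k) (by omega)
    convert this using 1
    field_simp
    ring
  have herr : ((x + c / x) / 2) ^ 2 - c = (x ^ 2 - c) ^ 2 / (2 * x) ^ 2 := by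
    field_simp
    ring
  obtain ⟨hy0, hyν⟩ := ν_add_eq_of_lt hx (y := (x + c / x) / 2 - x) (hstep.mono (by omega))
  rw [add_sub_cancel] at hy0 hyν
  refine ⟨hy0, hyν.trans hxν, ?_, hstep⟩
  rw [herr]
  refine (sq (x ^ 2 - c) ▸ (hc.mul hc).div (pow_ne_zero 2 h2x)).mono ?_
  rw [ν_pow h2x, h2xν]
  omega

theorem exists_limit (hcomp : V.IsComplete) {f : ℕ → K}
    (hf : ∀ n : ℕ, V.NuGe (n + 1) (f (n + 1) - f n)) :
    ∃ L, ∀ n : ℕ, V.NuGe (n + 1) (f n - L) := by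
  have htel : ∀ n k : ℕ, V.NuGe (n + 1) (f (n + k) - f n) := by
    intro n k
    induction k with
    | zero => simpa using NuGe.zero _
    | succ k ih =>
      rw [← add_assoc, ← sub_add_sub_cancel _ (f (n + k))]
      exact ((hf (n + k)).mono (by push_cast; omega)).add ih
  have hdist : ∀ m n : ℕ, V.NuGe (min m n + 1) (f m - f n) := by
    intro m n
    rcases le_total n m with h | h
    · obtain ⟨k, rfl⟩ := Nat.exists_eq_add_of_le h
      simpa [h] using htel n k
    · obtain ⟨k, rfl⟩ := Nat.exists_eq_add_of_le h
      simpa [h, neg_sub] using (htel m k).neg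
  obtain ⟨L, hL⟩ := hcomp f fun M => ⟨M.toNat, fun m n hm hn =>
    (hdist m n).mono (by omega)⟩
  refine ⟨L, fun n => ?_⟩
  obtain ⟨N, hN⟩ := hL (n + 1)
  rw [← sub_add_sub_cancel _ (f (max n N))]
  exact ((hdist n (max n N)).mono (by omega)).add (hN _ (le_max_right n N))

/-- Hensel's lemma for `X² - c`, by Newton's iteration `x ↦ (x + c / x) / 2`. -/
theorem exists_sq_eq (hcomp : V.IsComplete) (h2 : V.ResCharNeTwo) {c r : K} (hr : r ≠ 0)
    (hrν : V.ν r = 0) (happ : V.NuGe 1 (r ^ 2 - c)) : ∃ s, s ≠ 0 ∧ s ^ 2 = c := by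
  set f : ℕ → K := fun n => (fun x => (x + c / x) / 2)^[n] r
  have hf : ∀ n, f (n + 1) = (f n + c / f n) / 2 := fun n => Function.iterate_succ_apply' _ n r
  have hinv : ∀ n : ℕ, f n ≠ 0 ∧ V.ν (f n) = 0 ∧ V.NuGe (n + 1) (f n ^ 2 - c) := by
    intro n
    induction n with
    | zero => simpa [f] using ⟨hr, hrν, happ⟩
    | succ n ih =>
      obtain ⟨h0, hν, hsq, -⟩ := newton_step h2 ih.1 ih.2.1 (by omega) ih.2.2
      rw [hf]
      exact ⟨h0, hν, by exact_mod_cast hsq⟩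
  obtain ⟨L, hL⟩ := exists_limit hcomp (f := f) fun n => by
    rw [hf]
    exact (newton_step h2 (hinv n).1 (hinv n).2.1 (by omega) (hinv n).2.2).2.2.2
  have hsq : L ^ 2 = c := by
    refine sub_eq_zero.mp (eq_zero_of_forall_nuGe (V := V) fun n => ?_)
    have hsplit : L ^ 2 - c = -(f n - L) * (2 * f n - (f n - L)) + (f n ^ 2 - c) := by ring
    have h2fn : V.NuGe (0 + 0) (2 * f n) := NuGe.mul (Or.inr h2.2.ge) (Or.inr (hinv n).2.1.ge)
    have hint : V.NuGe 0 (2 * f n - (f n - L)) := h2fn.sub ((hL n).mono (by omega))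
    rw [hsplit]
    exact (((hL n).neg.mul hint).mono (by omega)).add (hinv n).2.2
  have hc : c ≠ 0 := by
    have hr2 : V.ν (r ^ 2) = 0 := by rw [ν_pow hr, hrν, mul_zero]
    have := (ν_add_eq_of_lt (pow_ne_zero 2 hr) (by rw [hr2]; exact happ.neg)).1
    rwa [show r ^ 2 + -(r ^ 2 - c) = c by ring] at this
  exact ⟨L, by rintro rfl; simp [← hsq] at hc, hsq⟩

open QuadraticMap

variable {ι : Type*} [Fintype ι]

theorem weightedSumSquares_update [DecidableEq ι] (c x : ι → K) (i : ι) (s : K) :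
    weightedSumSquares K c (Function.update x i s) =
      weightedSumSquares K c x + c i * (s ^ 2 - x i ^ 2) := by
  rw [← sub_eq_iff_eq_add', weightedSumSquares_apply, weightedSumSquares_apply,
    ← Finset.sum_sub_distrib, Finset.sum_eq_single i]
  · simp only [Function.update_self, smul_eq_mul]; ring
  · intro j _ hj
    simp [Function.update_of_ne hj]
  · simp

theorem ν_weightedSumSquares_eq_zero (hcomp : V.IsComplete) (h2 : V.ResCharNeTwo)
    {c : ι → K} (hc : ∀ i, V.IntUnit (c i)) (hQ : (weightedSumSquares K c).Anisotropic)
    {x : ι → K} (hx : ∀ i, V.NuGe 0 (x i)) {i : ι} (hxi : V.IntUnit (x i)) :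
    V.ν (weightedSumSquares K c x) = 0 := by
  classical
  set q := weightedSumSquares K c x with hq
  have hq0 : q ≠ 0 := fun h => hxi.1 (by rw [hQ x h, Pi.zero_apply])
  have hqint : V.NuGe 0 q := by
    rw [hq, weightedSumSquares_apply]
    exact NuGe.sum fun j _ => (NuGe.mul (Or.inr (hc j).2.ge) ((hx j).mul (hx j))).mono (by omega)
  by_contra hqν
  have hq1 : 1 ≤ V.ν q := by have := hqint.resolve_left hq0; omega
  have happ : V.NuGe 1 (x i ^ 2 - (x i ^ 2 - q / c i)) := by
    rw [sub_sub_cancel]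
    exact (NuGe.div (Or.inr hq1) (hc i).1).mono (by rw [(hc i).2]; omega)
  obtain ⟨s, hs0, hs⟩ := exists_sq_eq hcomp h2 hxi.1 hxi.2 happ
  have hiso : weightedSumSquares K c (Function.update x i s) = 0 := by
    rw [weightedSumSquares_update, hs, ← hq]
    field_simp [(hc i).1]
    ring
  exact hs0 (by simpa using congrFun (hQ _ hiso) i)

theorem exists_ν_weightedSumSquares_eq (hcomp : V.IsComplete) (h2 : V.ResCharNeTwo)
    {c : ι → K} (hc : ∀ i, V.IntUnit (c i)) (hQ : (weightedSumSquares K c).Anisotropic)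
    {x : ι → K} (hx : x ≠ 0) :
    ∃ i, x i ≠ 0 ∧ (∀ j, V.NuGe (V.ν (x i)) (x j)) ∧
      V.ν (weightedSumSquares K c x) = 2 * V.ν (x i) := by
  classical
  obtain ⟨j, hj⟩ := Function.ne_iff.mp hx
  obtain ⟨i, hi, hmin⟩ := Finset.exists_min_image {j | x j ≠ 0} (fun j => V.ν (x j))
    ⟨j, by simpa using hj⟩
  simp only [Finset.mem_filter, Finset.mem_univ, true_and] at hi hmin
  have hge : ∀ j, V.NuGe (V.ν (x i)) (x j) := fun j =>
    (eq_or_ne (x j) 0).imp id (hmin j)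
  set y := (x i)⁻¹ • x
  have hy : ∀ j, V.NuGe 0 (y j) := fun j => by
    simpa [y, div_eq_inv_mul] using (hge j).div hi
  have hyi : V.IntUnit (y i) := by
    simp [y, inv_mul_cancel₀ hi, IntUnit, V.ν_one]
  have hy0 : weightedSumSquares K c y ≠ 0 := fun h => hyi.1 (by rw [hQ y h, Pi.zero_apply])
  have hscale : weightedSumSquares K c x = (x i * x i) * weightedSumSquares K c y := by
    rw [← smul_eq_mul, ← QuadraticMap.map_smul, smul_smul, mul_inv_cancel₀ hi, one_smul]
  refine ⟨i, hi, hge, ?_⟩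
  rw [hscale, V.ν_mul _ _ (mul_ne_zero hi hi) hy0, V.ν_mul _ _ hi hi,
    ν_weightedSumSquares_eq_zero hcomp h2 hc hQ hy hyi]
  ring

theorem even_ν_weightedSumSquares (hcomp : V.IsComplete) (h2 : V.ResCharNeTwo)
    {c : ι → K} (hc : ∀ i, V.IntUnit (c i)) (hQ : (weightedSumSquares K c).Anisotropic)
    {x : ι → K} (hx : weightedSumSquares K c x ≠ 0) :
    Even (V.ν (weightedSumSquares K c x)) := by
  obtain ⟨i, -, -, hν⟩ := exists_ν_weightedSumSquares_eq hcomp h2 hc hQ (x := x)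
    (fun h => hx (by rw [h, QuadraticMap.map_zero]))
  exact ⟨V.ν (x i), by omega⟩

theorem nuGe_zero_of_nuGe_zero_mul_weightedSumSquares (hcomp : V.IsComplete)
    (h2 : V.ResCharNeTwo) {c : ι → K} (hc : ∀ i, V.IntUnit (c i))
    (hQ : (weightedSumSquares K c).Anisotropic) {s : K} (hs : s ≠ 0) (hsν : V.ν s ≤ 1)
    {x : ι → K} (h : V.NuGe 0 (s * weightedSumSquares K c x)) (j : ι) : V.NuGe 0 (x j) := by
  rcases eq_or_ne x 0 with rfl | hx
  · exact NuGe.zero 0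
  obtain ⟨i, -, hge, hν⟩ := exists_ν_weightedSumSquares_eq hcomp h2 hc hQ hx
  have hQx : weightedSumSquares K c x ≠ 0 := fun h => hx (hQ x h)
  have := h.resolve_left (mul_ne_zero hs hQx)
  rw [V.ν_mul _ _ hs hQx, hν] at this
  exact (hge j).mono (by omega)

end DVal

section Quaternion

open QuadraticMap QuaternionAlgebra DVal

variable {K : Type} [Field K] {a b : K}

theorem qnrd_eq_weightedSumSquares (u : QuaternionAlgebra K a 0 b) :
    qnrd a b u = weightedSumSquares K ![1, -a, -b, a * b] ![u.re, u.imI, u.imJ, u.imK] := by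
  simp [qnrd, Fin.sum_univ_four]
  ring

theorem qnrd_eq_add (u : QuaternionAlgebra K a 0 b) :
    qnrd a b u = weightedSumSquares K ![1, -a] ![u.re, u.imI] +
      -b * weightedSumSquares K ![1, -a] ![u.imJ, u.imK] := by
  simp [qnrd, Fin.sum_univ_two]
  ring

theorem QAniso.anisotropic (h : QAniso a b) :
    (weightedSumSquares K ![1, -a, -b, a * b]).Anisotropic := by
  intro x hx
  have := h (x 0) (x 1) (x 2) (x 3)
    (by simpa [Fin.sum_univ_four, _root_.sq, sub_eq_add_neg] using hx)
  ext i; fin_cases i <;> simp [this]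

theorem QAniso.anisotropic_one_neg (h : QAniso a b) :
    (weightedSumSquares K ![1, -a]).Anisotropic := by
  intro x hx
  have := h (x 0) (x 1) 0 0 (by simpa [Fin.sum_univ_two, _root_.sq, sub_eq_add_neg] using hx)
  ext i; fin_cases i <;> simp [this]

theorem qnrd_ne_zero (h : QAniso a b) {u : QuaternionAlgebra K a 0 b} (hu : u ≠ 0) :
    qnrd a b u ≠ 0 := fun hq => hu (by
  obtain ⟨h1, h2, h3, h4⟩ := h _ _ _ _ hq
  ext <;> assumption)

theorem qnrd_mul (x y : QuaternionAlgebra K a 0 b) :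
    qnrd a b (x * y) = qnrd a b x * qnrd a b y := by
  simp only [qnrd, re_mul, imI_mul, imJ_mul, imK_mul]
  ring

theorem qnrd_qtau (x : QuaternionAlgebra K a 0 b) : qnrd a b (qtau x) = qnrd a b x := by
  simp only [qnrd, qtau]
  ring

theorem qnrd_coe (c : K) : qnrd a b (c : QuaternionAlgebra K a 0 b) = c ^ 2 := by
  simp [qnrd]

theorem isUnit_of_qnrd_ne_zero {x : QuaternionAlgebra K a 0 b} (hx : qnrd a b x ≠ 0) :
    IsUnit x := by
  have hright : x * star x = qnrd a b x := by
    rw [mul_star_eq_coe]; congr 1; simp [qnrd]; ring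
  have hleft : star x * x = qnrd a b x := by
    rw [star_mul_eq_coe]; congr 1; simp [qnrd]; ring
  refine isUnit_iff_exists.mpr ⟨star x * ((qnrd a b x)⁻¹ : K), ?_, ?_⟩
  · rw [← mul_assoc, hright, ← coe_mul, mul_inv_cancel₀ hx, coe_one]
  · rw [mul_assoc, coe_commutes, ← mul_assoc, hleft, ← coe_mul, mul_inv_cancel₀ hx, coe_one]

theorem qnrd_twist_mul_mul {lam mu : QuaternionAlgebra K a 0 b} (hmu : lam * mu = 1)
    (t u : QuaternionAlgebra K a 0 b) :
    qnrd a b (lam * qtau t * mu * u * t) = qnrd a b t ^ 2 * qnrd a b u := by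
  have h := congrArg (qnrd a b) hmu
  rw [qnrd_mul, ← coe_one, qnrd_coe, one_pow] at h
  simp only [qnrd_mul, qnrd_qtau]
  linear_combination (qnrd a b t ^ 2 * qnrd a b u) * h

variable {V : DVal K}

theorem intUnit_one_neg (ha0 : a ≠ 0) (hva : V.ν a = 0) (i : Fin 2) :
    V.IntUnit (![1, -a] i) := by
  fin_cases i
  · exact ⟨one_ne_zero, V.ν_one⟩
  · exact ⟨neg_ne_zero.mpr ha0, by simp [ν_neg ha0, hva]⟩

theorem intUnit_one_neg_neg_mul (ha0 : a ≠ 0) (hva : V.ν a = 0) (hb0 : b ≠ 0) (hvb : V.ν b = 0)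
    (i : Fin 4) : V.IntUnit (![1, -a, -b, a * b] i) := by
  fin_cases i
  · exact ⟨one_ne_zero, V.ν_one⟩
  · exact ⟨neg_ne_zero.mpr ha0, by simp [ν_neg ha0, hva]⟩
  · exact ⟨neg_ne_zero.mpr hb0, by simp [ν_neg hb0, hvb]⟩
  · exact ⟨mul_ne_zero ha0 hb0, by simp [V.ν_mul _ _ ha0 hb0, hva, hvb]⟩

theorem even_ν_qnrd (hcomp : V.IsComplete) (h2 : V.ResCharNeTwo) (ha0 : a ≠ 0)
    (hva : V.ν a = 0) (hb0 : b ≠ 0) (hvb : V.ν b = 0) (haniso : QAniso a b)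
    {u : QuaternionAlgebra K a 0 b} (hu : qnrd a b u ≠ 0) : Even (V.ν (qnrd a b u)) := by
  rw [qnrd_eq_weightedSumSquares] at hu ⊢
  exact even_ν_weightedSumSquares hcomp h2 (intUnit_one_neg_neg_mul ha0 hva hb0 hvb)
    haniso.anisotropic hu

theorem int_coords_of_nuGe_zero_qnrd (hcomp : V.IsComplete) (h2 : V.ResCharNeTwo)
    (ha0 : a ≠ 0) (hva : V.ν a = 0) (hb0 : b ≠ 0) (hvb : V.ν b = 0 ∨ V.ν b = 1)
    (haniso : QAniso a b) {w : QuaternionAlgebra K a 0 b} (h : V.NuGe 0 (qnrd a b w)) :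
    V.Int w.re ∧ V.Int w.imI ∧ V.Int w.imJ ∧ V.Int w.imK := by
  rcases hvb with hvb | hvb
  · rw [qnrd_eq_weightedSumSquares, ← one_mul (weightedSumSquares _ _ _)] at h
    have hint := nuGe_zero_of_nuGe_zero_mul_weightedSumSquares hcomp h2
      (intUnit_one_neg_neg_mul ha0 hva hb0 hvb) haniso.anisotropic one_ne_zero
      (by rw [V.ν_one]; omega) h
    exact ⟨hint 0, hint 1, hint 2, hint 3⟩
  have hc := intUnit_one_neg (V := V) ha0 hva
  have hQ := haniso.anisotropic_one_neg
  have hb' : -b ≠ 0 := neg_ne_zero.mpr hb0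
  rw [qnrd_eq_add] at h
  obtain ⟨hfirst, hsecond⟩ := h.of_add fun hN₁ hbN₂ hν => by
    have hN₂ : weightedSumSquares K ![1, -a] ![w.imJ, w.imK] ≠ 0 := right_ne_zero_of_mul hbN₂
    obtain ⟨r, hr⟩ := even_ν_weightedSumSquares hcomp h2 hc hQ hN₁
    obtain ⟨r', hr'⟩ := even_ν_weightedSumSquares hcomp h2 hc hQ hN₂
    rw [V.ν_mul _ _ hb' hN₂, ν_neg hb0, hvb] at hν
    omega
  rw [← one_mul (weightedSumSquares _ _ _)] at hfirst
  have hint1 := nuGe_zero_of_nuGe_zero_mul_weightedSumSquares hcomp h2 hc hQ one_ne_zero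
    (by rw [V.ν_one]; omega) hfirst
  have hint2 := nuGe_zero_of_nuGe_zero_mul_weightedSumSquares hcomp h2 hc hQ hb'
    (by rw [ν_neg hb0, hvb]) hsecond
  exact ⟨hint1 0, hint1 1, hint2 0, hint2 1⟩

theorem exists_ν_qnrd_eq {p : K} (hp : p ≠ 0) (hpν : V.ν p = 1) (m : ℤ)
    {s : QuaternionAlgebra K a 0 b} (hs : qnrd a b s ≠ 0) :
    ∃ t : QuaternionAlgebra K a 0 b,
      qnrd a b t ≠ 0 ∧ V.ν (qnrd a b t) = 2 * m + V.ν (qnrd a b s) := by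
  have hpm : p ^ m ≠ 0 := zpow_ne_zero m hp
  refine ⟨(p ^ m : K) * s, ?_, ?_⟩ <;> rw [qnrd_mul, qnrd_coe]
  · exact mul_ne_zero (pow_ne_zero 2 hpm) hs
  · rw [V.ν_mul _ _ (pow_ne_zero 2 hpm) hs, ν_pow hpm, ν_zpow hp, hpν]
    push_cast; ring

/-- `2 - ν(b) = 2/j`: the targets are the values `ν_D ∈ {0, 1/j}`. -/
theorem exists_ν_qnrd_normalizing (hb0 : b ≠ 0) (hvb : V.ν b = 0 ∨ V.ν b = 1) (n : ℤ)
    (hn : V.ν b = 0 → Even n) :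
    ∃ t : QuaternionAlgebra K a 0 b, qnrd a b t ≠ 0 ∧
      (2 * V.ν (qnrd a b t) + n = 0 ∨ 2 * V.ν (qnrd a b t) + n = 2 - V.ν b) := by
  obtain ⟨p, hp, hpν⟩ := V.ν_surj 1
  set y : QuaternionAlgebra K a 0 b := ⟨0, 0, 1, 0⟩
  have hy : qnrd a b y = -b := by simp [y, qnrd]
  have h1 : qnrd a b (1 : QuaternionAlgebra K a 0 b) = 1 := by rw [← coe_one, qnrd_coe, one_pow]
  by_cases hr : n % 4 = 0 ∨ n % 4 = 2 - V.ν b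
  · obtain ⟨t, ht, htν⟩ := exists_ν_qnrd_eq hp hpν (-(n / 4)) (h1 ▸ one_ne_zero)
    rw [h1, V.ν_one] at htν
    exact ⟨t, ht, by omega⟩
  · obtain ⟨t, ht, htν⟩ := exists_ν_qnrd_eq hp hpν (-((n + 2 * V.ν b) / 4))
      (hy ▸ neg_ne_zero.mpr hb0)
    rw [hy, ν_neg hb0] at htν
    refine ⟨t, ht, ?_⟩
    rcases hvb with hvb | hvb
    · obtain ⟨r, rfl⟩ := hn hvb
      omega
    · omega

end Quaternion

theorem stmt_17_general (K : Type) [Field K] (V : DVal K)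
    (hcomp : V.IsComplete) (hchar : V.ResCharNeTwo)
    -- D = ℍ[K,a,b] a division ring with ν(a) = 0, ν(b) ∈ {0,1}, and j accordingly
    (a b : K) (ha0 : a ≠ 0) (hva : V.ν a = 0) (hb0 : b ≠ 0)
    (j : ℕ) (hj : (V.ν b = 0 ∧ j = 1) ∨ (V.ν b = 1 ∧ j = 2))
    (haniso : QAniso a b)
    -- σ = τ_λ with λ ∈ {1, x, y} (μ = λ⁻¹)
    (lam mu : QuaternionAlgebra K a 0 b)
    (hmu : lam * mu = 1)
    (σ : QuaternionAlgebra K a 0 b → QuaternionAlgebra K a 0 b)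
    (hσ : ∀ u, σ u = lam * qtau u * mu)
    (u : QuaternionAlgebra K a 0 b) (hu0 : u ≠ 0) :
    ∃ t : QuaternionAlgebra K a 0 b, IsUnit t ∧
      V.Int (σ t * u * t).re ∧ V.Int (σ t * u * t).imI ∧
      V.Int (σ t * u * t).imJ ∧ V.Int (σ t * u * t).imK ∧
      (qnu V a b (σ t * u * t) = 0 ∨ qnu V a b (σ t * u * t) = 1 / (j : ℚ)) := by
  have hvb : V.ν b = 0 ∨ V.ν b = 1 := hj.imp And.left And.left
  have hu := qnrd_ne_zero haniso hu0
  obtain ⟨t, ht, htν⟩ := exists_ν_qnrd_normalizing hb0 hvb (V.ν (qnrd a b u))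
    fun hvb0 => even_ν_qnrd hcomp hchar ha0 hva hb0 hvb0 haniso hu
  have hw : V.ν (qnrd a b (σ t * u * t)) = 2 * V.ν (qnrd a b t) + V.ν (qnrd a b u) := by
    rw [hσ, qnrd_twist_mul_mul hmu, V.ν_mul _ _ (pow_ne_zero 2 ht) hu, DVal.ν_pow ht]
    push_cast; ring
  obtain ⟨h1, h2, h3, h4⟩ := int_coords_of_nuGe_zero_qnrd hcomp hchar ha0 hva hb0 hvb haniso
    (w := σ t * u * t) (Or.inr (by omega))
  refine ⟨t, isUnit_of_qnrd_ne_zero ht, h1, h2, h3, h4, ?_⟩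
  simp only [qnu, hw]
  rcases htν with h | h
  · simp [h]
  · rcases hj with ⟨hb, rfl⟩ | ⟨hb, rfl⟩ <;> simp [h, hb]

/-- every one-dimensional ε-hermitian form over `(ℍ[K,a,b], τ_λ)`,
`λ ∈ {1,x,y}`, is isometric to one whose diagonal entry has coordinates in `O_K` and
valuation `0` or `1/j`. -/
theorem stmt_17 (K : Type) [Field K] (V : DVal K)
    (hcomp : V.IsComplete) (hchar : V.ResCharNeTwo)
    -- D = ℍ[K,a,b] a division ring with ν(a) = 0, ν(b) ∈ {0,1}, and j accordingly
    (a b : K) (ha0 : a ≠ 0) (hva : V.ν a = 0) (hb0 : b ≠ 0)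
    (j : ℕ) (hj : (V.ν b = 0 ∧ j = 1) ∨ (V.ν b = 1 ∧ j = 2))
    (haniso : QAniso a b)
    -- σ = τ_λ with λ ∈ {1, x, y} (μ = λ⁻¹)
    (lam mu : QuaternionAlgebra K a 0 b)
    (hlam : lam = 1 ∨ lam = (⟨0, 1, 0, 0⟩ : QuaternionAlgebra K a 0 b)
        ∨ lam = (⟨0, 0, 1, 0⟩ : QuaternionAlgebra K a 0 b))
    (hmu : lam * mu = 1) (hmu' : mu * lam = 1)
    (σ : QuaternionAlgebra K a 0 b → QuaternionAlgebra K a 0 b)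
    (hσ : ∀ u, σ u = lam * qtau u * mu)
    -- ε ∈ {1, -1} and u is a nonzero ε-symmetric element
    (ε : K) (hε : ε = 1 ∨ ε = -1)
    (u : QuaternionAlgebra K a 0 b) (hu0 : u ≠ 0) (hsym : σ u = ε • u) :
    ∃ t : QuaternionAlgebra K a 0 b, IsUnit t ∧
      V.Int (σ t * u * t).re ∧ V.Int (σ t * u * t).imI ∧
      V.Int (σ t * u * t).imJ ∧ V.Int (σ t * u * t).imK ∧
      (qnu V a b (σ t * u * t) = 0 ∨ qnu V a b (σ t * u * t) = 1 / (j : ℚ)) :=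
  stmt_17_general K V hcomp hchar a b ha0 hva hb0 j hj haniso lam mu hmu σ hσ u hu0
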